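/- arXiv:math/0007187 — 4 statements merged into one kernel-verified Lean document; each statement's English description precedes it below -/
import Mathlib

section
/- Let μ₁, μ₂ ≥ 1 and let α : Fin μ₁ → ℝ, β : Fin μ₂ → ℝ be finite families of real numbers satisfying the symmetries α(i) + α(μ₁-1-i) = n-1 for all i and β(j) + β(μ₂-1-j) = m-1 for all j (for real constants n, m). Define the Thom–Sebastiani family γ : Fin μ₁ × Fin μ₂ → ℝ by γ(i,j) = α(i) + β(j) + 1, which satisfies γ(i,j) + γ(μ₁-1-i, μ₂-1-j) = (n+m+1) - 1. Define γ(f) := -(1/4)∑_i (α(i) - (n-1)/2)² + μ₁(α_max - α_min)/48 where α_max = max_i α(i), α_min = min_i α(i), and similarly γ(g) for β and γ(f+g) for the family γ (with maximum γ_max = α_max + β_max + 1 and minimum γ_min = α_min + β_min + 1, assuming α, β are nondecreasing). Then γ(f+g) = μ₁·γ(g) + μ₂·γ(f). -/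
lemma sum_sym_eq {μ : ℕ} (f : Fin μ → ℝ) (s : ℝ)
    (h : 1 ≤ μ)
    (hsym : ∀ i : Fin μ, f i + f ⟨μ - 1 - (i : ℕ), by omega⟩ = s) :
    ∑ i, f i = μ * s / 2 := by
  have he : Function.Bijective (fun i : Fin μ => (⟨μ - 1 - (i : ℕ), by omega⟩ : Fin μ)) := by
    apply Function.Involutive.bijective
    intro i; ext; simp; omega
  have h1 : ∑ i : Fin μ, f ⟨μ - 1 - (i : ℕ), by omega⟩ = ∑ i, f i :=
    Fintype.sum_bijective _ he _ _ (fun i => rfl)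
  have h2 : ∑ i : Fin μ, (f i + f ⟨μ - 1 - (i : ℕ), by omega⟩) = μ * s := by
    rw [Finset.sum_congr rfl (fun i _ => hsym i)]
    simp [mul_comm]
  rw [Finset.sum_add_distrib, h1] at h2
  linarith

/-- Additivity of the γ-invariant under Thom–Sebastiani sums:
for spectra α (symmetric about (n-1)/2) and β (symmetric about (m-1)/2),
the γ-invariant of the joined spectrum {α_i + β_j + 1} satisfies
γ(f+g) = μ₁·γ(g) + μ₂·γ(f). -/
theorem gamma_thom_sebastiani (μ₁ μ₂ : ℕ) (h₁ : 1 ≤ μ₁) (h₂ : 1 ≤ μ₂) (n m : ℝ)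
    (α : Fin μ₁ → ℝ) (β : Fin μ₂ → ℝ)
    (hmα : Monotone α) (hmβ : Monotone β)
    (hsymα : ∀ i : Fin μ₁, α i + α ⟨μ₁ - 1 - (i : ℕ), by omega⟩ = n - 1)
    (hsymβ : ∀ j : Fin μ₂, β j + β ⟨μ₂ - 1 - (j : ℕ), by omega⟩ = m - 1) :
    -(1 / 4) * ∑ p : Fin μ₁ × Fin μ₂,
        (α p.1 + β p.2 + 1 - ((n + m + 1) - 1) / 2) ^ 2
      + ((μ₁ : ℝ) * μ₂) *
          ((α ⟨μ₁ - 1, by omega⟩ + β ⟨μ₂ - 1, by omega⟩ + 1)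
            - (α ⟨0, by omega⟩ + β ⟨0, by omega⟩ + 1)) / 48
    = (μ₁ : ℝ) *
        (-(1 / 4) * ∑ j, (β j - (m - 1) / 2) ^ 2
          + (μ₂ : ℝ) * (β ⟨μ₂ - 1, by omega⟩ - β ⟨0, by omega⟩) / 48)
      + (μ₂ : ℝ) *
        (-(1 / 4) * ∑ i, (α i - (n - 1) / 2) ^ 2
          + (μ₁ : ℝ) * (α ⟨μ₁ - 1, by omega⟩ - α ⟨0, by omega⟩) / 48) := by
  have SA : ∑ i, α i = μ₁ * (n - 1) / 2 := sum_sym_eq α (n - 1) h₁ hsymα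
  have SB : ∑ j, β j = μ₂ * (m - 1) / 2 := sum_sym_eq β (m - 1) h₂ hsymβ
  set a : Fin μ₁ → ℝ := fun i => α i - (n - 1) / 2 with ha
  set b : Fin μ₂ → ℝ := fun j => β j - (m - 1) / 2 with hb
  have hA : ∑ i, a i = 0 := by
    simp only [ha, Finset.sum_sub_distrib, SA, Finset.sum_const, Finset.card_univ,
      Fintype.card_fin, nsmul_eq_mul]
    ring
  have hB : ∑ j, b j = 0 := by
    simp only [hb, Finset.sum_sub_distrib, SB, Finset.sum_const, Finset.card_univ,
      Fintype.card_fin, nsmul_eq_mul]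
    ring
  have key : ∑ p : Fin μ₁ × Fin μ₂, (α p.1 + β p.2 + 1 - ((n + m + 1) - 1) / 2) ^ 2
      = μ₂ * ∑ i, a i ^ 2 + μ₁ * ∑ j, b j ^ 2 := by
    rw [Fintype.sum_prod_type]
    have step : ∀ i : Fin μ₁, ∑ j, (α i + β j + 1 - ((n + m + 1) - 1) / 2) ^ 2
        = μ₂ * a i ^ 2 + ∑ j, b j ^ 2 := by
      intro i
      have : ∀ j : Fin μ₂, (α i + β j + 1 - ((n + m + 1) - 1) / 2) ^ 2
          = a i ^ 2 + 2 * a i * b j + b j ^ 2 := by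
        intro j; simp only [ha, hb]; ring
      rw [Finset.sum_congr rfl (fun j _ => this j)]
      rw [Finset.sum_add_distrib, Finset.sum_add_distrib, Finset.sum_const,
        ← Finset.mul_sum, hB]
      simp only [Finset.card_univ, Fintype.card_fin, nsmul_eq_mul, mul_zero, add_zero]
    rw [Finset.sum_congr rfl (fun i _ => step i)]
    rw [Finset.sum_add_distrib, ← Finset.mul_sum, Finset.sum_const]
    simp only [Finset.card_univ, Fintype.card_fin, nsmul_eq_mul]
  rw [key]
  simp only [ha, hb]
  ring
end

section
/- Let A be a finite-dimensional commutative local Frobenius algebra over ℂ with unit e, maximal ideal m, and multiplication-invariant nondegenerate symmetric bilinear form g. Let (x_i), (x̃_i) be g-dual bases of A. Then ∑_i x_i * x̃_i lies in the socle Ann_A(m), and g(e, ∑_i x_i * x̃_i) = dim_ℂ A. Consequently ∑_i x_i * x̃_i equals the unique socle generator H normalized by g(e, H) = dim A. -/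
/-!
For `g`-dual bases `(xᵢ)`, `(x̃ᵢ)` the trace of any endomorphism `f` is `∑ g (f xᵢ) x̃ᵢ`; for
multiplication by `w`, invariance of `g` rewrites this as `g (w * ∑ xᵢ x̃ᵢ) 1`. Since `A` is
Artinian local, every `w ∈ m` is nilpotent, so multiplication by `w` has trace zero, and
nondegeneracy of `g` then forces `m * ∑ xᵢ x̃ᵢ = 0`. Taking `w = 1` gives `dim A`.
-/

open Module

namespace Module.Basis

variable {R M N ι : Type*} [CommSemiring R] [AddCommMonoid M] [Module R M] [AddCommMonoid N]
  [Module R N] [Fintype ι] [DecidableEq ι] {g : M →ₗ[R] N →ₗ[R] R} (b : Basis ι R M) {xt : ι → N}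

theorem apply_eq_repr_of_isDual (hb : ∀ i j, g (b i) (xt j) = if i = j then 1 else 0)
    (v : M) (j : ι) : g v (xt j) = b.repr v j := by
  calc g v (xt j) = g (∑ i, b.repr v i • b i) (xt j) := by rw [b.sum_repr]
    _ = b.repr v j := by
      simp only [map_sum, map_smul, LinearMap.sum_apply, LinearMap.smul_apply, hb, smul_eq_mul,
        mul_ite, mul_one, mul_zero, Finset.sum_ite_eq', Finset.mem_univ, if_true]

theorem trace_eq_sum_apply_of_isDual (hb : ∀ i j, g (b i) (xt j) = if i = j then 1 else 0)
    (f : M →ₗ[R] M) : LinearMap.trace R M f = ∑ i, g (f (b i)) (xt i) := by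
  simp [LinearMap.trace_eq_matrix_trace R b, Matrix.trace, LinearMap.toMatrix_apply,
    b.apply_eq_repr_of_isDual hb]

end Module.Basis

theorem Algebra.trace_eq_apply_mul_sum_mul_of_isDual {K A ι : Type*} [CommRing K] [CommRing A]
    [Algebra K A] [Fintype ι] [DecidableEq ι] {g : A →ₗ[K] A →ₗ[K] K}
    (hinv : ∀ x y z : A, g (x * y) z = g x (y * z)) (b : Basis ι K A) {xt : ι → A}
    (hb : ∀ i j, g (b i) (xt j) = if i = j then 1 else 0) (w : A) :
    Algebra.trace K A w = g (w * ∑ i, b i * xt i) 1 := by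
  rw [Algebra.trace_apply, b.trace_eq_sum_apply_of_isDual hb, Finset.mul_sum, map_sum,
    LinearMap.sum_apply]
  refine Finset.sum_congr rfl fun i _ => ?_
  rw [← mul_assoc, hinv, mul_one, Algebra.coe_lmul_eq_mul, LinearMap.mul_apply']

theorem IsLocalRing.trace_eq_zero_of_mem_maximalIdeal {K A : Type*} [Field K] [CommRing A]
    [Algebra K A] [FiniteDimensional K A] [IsLocalRing A] {w : A}
    (hw : w ∈ IsLocalRing.maximalIdeal A) : Algebra.trace K A w = 0 := by
  have : IsArtinianRing A := IsArtinianRing.of_finite K A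
  exact (Algebra.isNilpotent_trace_of_isNilpotent
    (Ring.KrullDimLE.isNilpotent_iff_mem_maximalIdeal.mpr hw)).eq_zero

theorem socle_element_generates_general (m : ℕ) (A : Type*) [CommRing A] [Algebra ℂ A]
    [FiniteDimensional ℂ A] [IsLocalRing A]
    (g : A →ₗ[ℂ] A →ₗ[ℂ] ℂ)
    (hinv : ∀ x y z : A, g (x * y) z = g x (y * z))
    (hnd : ∀ x : A, (∀ y : A, g x y = 0) → x = 0)
    (b : Module.Basis (Fin m) ℂ A) (xt : Fin m → A)
    (hb : ∀ i j, g (b i) (xt j) = if i = j then 1 else 0) :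
    (∑ i, b i * xt i) ∈ Submodule.annihilator (IsLocalRing.maximalIdeal A) ∧
      g 1 (∑ i, b i * xt i) = (Module.finrank ℂ A : ℂ) := by
  have htrace := Algebra.trace_eq_apply_mul_sum_mul_of_isDual hinv b hb
  set s := ∑ i, b i * xt i
  constructor
  · refine Submodule.mem_annihilator.mpr fun y hy => hnd _ fun z => ?_
    calc g (s • y) z = g ((y * z) * s) 1 := by
          rw [smul_eq_mul, ← mul_one z, ← hinv, mul_one, mul_comm s, mul_right_comm]
      _ = 0 := by
          rw [← htrace]
          exact IsLocalRing.trace_eq_zero_of_mem_maximalIdeal (Ideal.mul_mem_right z _ hy)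
  · calc g 1 s = g (1 * s) 1 := by rw [hinv, mul_one]
      _ = Algebra.trace ℂ A 1 := by rw [htrace]
      _ = Module.finrank ℂ A := by simpa using Algebra.trace_algebraMap (R := ℂ) (S := A) 1

/-- In a commutative local Frobenius algebra, the element ∑ x_i * x̃_i built from
g-dual bases lies in the socle Ann(m) and pairs with the unit to dim A. -/
theorem socle_element_generates (m : ℕ) (A : Type*) [CommRing A] [Algebra ℂ A]
    [FiniteDimensional ℂ A] [IsLocalRing A]
    (g : A →ₗ[ℂ] A →ₗ[ℂ] ℂ)
    (hsym : ∀ x y : A, g x y = g y x)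
    (hinv : ∀ x y z : A, g (x * y) z = g x (y * z))
    (hnd : ∀ x : A, (∀ y : A, g x y = 0) → x = 0)
    (b : Module.Basis (Fin m) ℂ A) (xt : Fin m → A)
    (hb : ∀ i j, g (b i) (xt j) = if i = j then 1 else 0) :
    (∑ i, b i * xt i) ∈ Submodule.annihilator (IsLocalRing.maximalIdeal A) ∧
      g 1 (∑ i, b i * xt i) = (Module.finrank ℂ A : ℂ) :=
  socle_element_generates_general m A g hinv hnd b xt hb
end

section
/- Let A be a finite-dimensional commutative Frobenius algebra with nondegenerate multiplication-invariant forms g and g̃ related by g̃(x,y) = g(z*x, y) for an invertible z ∈ A. Let H and H̃ be the socle elements of g and g̃ respectively (H = ∑ x_i * x̃_i for g-dual bases, H̃ = ∑ y_i * ỹ_i for g̃-dual bases). Then H = z * H̃. -/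
/-!
For a `g`-dual pair `(b, xt)`, i.e. `g (b i) (xt j) = δᵢⱼ`, the coefficient of `b i` in `x` is
`g x (xt i)`. Expanding the first factors of another `g`-dual pair `(c, yb)` in `b`, and then each
`xt i` in `yb`, shows `∑ c k * yb k = ∑ b i * xt i`: the socle element depends only on `g`.
As `g̃ x y = g (z * x) y`, a `g̃`-dual pair `(b', yt)` makes `(z * b', yt)` a `g`-dual pair, whose
socle sum is `z * ∑ b' i * yt i`.
-/

open Module

namespace Module.Basis

variable {K M ι : Type*} [CommRing K] [AddCommGroup M] [Module K M] [DecidableEq ι]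
  {g : M →ₗ[K] M →ₗ[K] K} {b : Basis ι K M} {xt : ι → M}

theorem repr_eq_of_dual (hb : ∀ i j, g (b i) (xt j) = if i = j then 1 else 0)
    (x : M) (i : ι) : b.repr x i = g x (xt i) := by
  have : b.coord i = g.flip (xt i) := b.ext fun j => by
    simp [hb, Finsupp.single_apply, eq_comm]
  exact LinearMap.congr_fun this x

theorem sum_apply_smul_of_dual [Fintype ι]
    (hb : ∀ i j, g (b i) (xt j) = if i = j then 1 else 0) (x : M) :
    ∑ i, g x (xt i) • b i = x := by
  simpa only [b.repr_eq_of_dual hb] using b.sum_repr x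

theorem linearIndependent_of_dual [Fintype ι]
    (hb : ∀ i j, g (b i) (xt j) = if i = j then 1 else 0) : LinearIndependent K xt := by
  refine Fintype.linearIndependent_iff.mpr fun l hl i => ?_
  simpa [hb] using congr_arg (g (b i)) hl

theorem sum_mul_eq_of_dual {A κ : Type*} [Ring A] [Algebra K A] [Fintype ι] [Fintype κ]
    [DecidableEq κ] {g : A →ₗ[K] A →ₗ[K] K} {b : Basis ι K A} {xt : ι → A}
    {c : κ → A} {yb : Basis κ K A}
    (hb : ∀ i j, g (b i) (xt j) = if i = j then 1 else 0)
    (hc : ∀ k l, g (c k) (yb l) = if k = l then 1 else 0) :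
    ∑ k, c k * yb k = ∑ i, b i * xt i := by
  have hc' : ∀ l k, g.flip (yb l) (c k) = if l = k then 1 else 0 := fun l k => by
    simp [hc, eq_comm]
  calc ∑ k, c k * yb k
      = ∑ k, (∑ i, g (c k) (xt i) • b i) * yb k := by
        simp only [b.sum_apply_smul_of_dual hb]
    _ = ∑ i, b i * ∑ k, g (c k) (xt i) • yb k := by
        simp only [Finset.sum_mul, Finset.mul_sum, smul_mul_assoc, mul_smul_comm]
        exact Finset.sum_comm
    _ = ∑ i, b i * xt i := by
        congr! 2 with i
        exact yb.sum_apply_smul_of_dual hc' (xt i)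

end Module.Basis

theorem socle_elements_comparison_general (m : ℕ) (A : Type*) [CommRing A] [Algebra ℂ A]
    [FiniteDimensional ℂ A]
    (g gt : A →ₗ[ℂ] A →ₗ[ℂ] ℂ)
    (z : A) (hrel : ∀ x y : A, gt x y = g (z * x) y)
    (b b' : Module.Basis (Fin m) ℂ A) (xt yt : Fin m → A)
    (hb : ∀ i j, g (b i) (xt j) = if i = j then 1 else 0)
    (hb' : ∀ i j, gt (b' i) (yt j) = if i = j then 1 else 0) :
    ∑ i, b i * xt i = z * ∑ i, b' i * yt i := by
  let yb := basisOfLinearIndependentOfCardEqFinrank' yt (b'.linearIndependent_of_dual hb')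
    (by simp [finrank_eq_card_basis b'])
  have hdual : ∀ i j, g (z * b' i) (yb j) = if i = j then 1 else 0 := fun i j => by
    simpa [yb, hrel] using hb' i j
  calc ∑ i, b i * xt i = ∑ i, z * b' i * yb i := (b.sum_mul_eq_of_dual hb hdual).symm
    _ = z * ∑ i, b' i * yt i := by simp [yb, Finset.mul_sum, mul_assoc]

/-- Comparison of socle elements of two metrics on a commutative Frobenius
algebra: if g̃(x,y) = g(z*x,y) with z invertible, then H = z * H̃. -/
theorem socle_elements_comparison (m : ℕ) (A : Type*) [CommRing A] [Algebra ℂ A]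
    [FiniteDimensional ℂ A]
    (g gt : A →ₗ[ℂ] A →ₗ[ℂ] ℂ)
    (hsym : ∀ x y : A, g x y = g y x) (hsymt : ∀ x y : A, gt x y = gt y x)
    (hinv : ∀ x y z : A, g (x * y) z = g x (y * z))
    (hinvt : ∀ x y z : A, gt (x * y) z = gt x (y * z))
    (hnd : ∀ x : A, (∀ y : A, g x y = 0) → x = 0)
    (z : A) (hz : IsUnit z) (hrel : ∀ x y : A, gt x y = g (z * x) y)
    (b b' : Module.Basis (Fin m) ℂ A) (xt yt : Fin m → A)
    (hb : ∀ i j, g (b i) (xt j) = if i = j then 1 else 0)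
    (hb' : ∀ i j, gt (b' i) (yt j) = if i = j then 1 else 0) :
    ∑ i, b i * xt i = z * ∑ i, b' i * yt i :=
  socle_elements_comparison_general m A g gt z hrel b b' xt yt hb hb'
end

section
/- Fix an integer d ≥ 2 and for k = 0, …, n let a_k ≥ 2 be integers with weights w_k = 1/a_k. The spectrum of the Brieskorn–Pham singularity f = x_0^{a_0} + … + x_n^{a_n} is the multiset of numbers α_{(i_0,…,i_n)} = (∑_{k=0}^n i_k/a_k) - 1 for i_k ∈ {1,…,a_k - 1}; these numbers are symmetric about (n-1)/2. Prove that (1/μ)·∑_{(i_0,…,i_n)} (α_{(i_0,…,i_n)} - (n-1)/2)² = (α_max - α_min)/12, where μ = ∏_k (a_k - 1), α_min = ∑_k 1/a_k - 1, α_max = n - ∑_k 1/a_k. -/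
lemma bp_sum1 (m : ℕ) : ∑ j : Fin m, ((j : ℝ) + 1) = (m : ℝ) * ((m : ℝ) + 1) / 2 := by
  induction m with
  | zero => simp
  | succ m ih =>
    rw [Fin.sum_univ_castSucc]
    simp only [Fin.coe_castSucc, Fin.val_last]
    rw [ih]; push_cast; ring

lemma bp_sum2 (m : ℕ) :
    ∑ j : Fin m, ((j : ℝ) + 1) ^ 2 = (m : ℝ) * ((m : ℝ) + 1) * (2 * (m : ℝ) + 1) / 6 := by
  induction m with
  | zero => simp
  | succ m ih =>
    rw [Fin.sum_univ_castSucc]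
    simp only [Fin.coe_castSucc, Fin.val_last]
    rw [ih]; push_cast; ring

lemma bp_key : ∀ (n : ℕ) (m : Fin n → ℕ) (g : ∀ k, Fin (m k) → ℝ),
    (∀ k, ∑ j, g k j = 0) → (∀ k, 0 < m k) →
    ∑ i : ∀ k, Fin (m k), (∑ k, g k (i k)) ^ 2
      = (∏ k, (m k : ℝ)) * ∑ k, (∑ j, (g k j) ^ 2) / (m k) := by
  intro n
  induction n with
  | zero => intro m g _ _; simp
  | succ n ih =>
    intro m g h0 hm
    set S : (∀ k : Fin n, Fin (m k.succ)) → ℝ := fun x => ∑ k : Fin n, g k.succ (x k) with hS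
    rw [← (Fin.consEquiv (fun k => Fin (m k))).sum_comp
        (fun i => (∑ k, g k (i k)) ^ 2), Fintype.sum_prod_type]
    have hrw : ∀ (j : Fin (m 0)) (x : ∀ k : Fin n, Fin (m k.succ)),
        (∑ k, g k ((Fin.consEquiv (fun k => Fin (m k))) (j, x) k)) ^ 2
        = g 0 j ^ 2 + 2 * g 0 j * S x + S x ^ 2 := by
      intro j x
      have : (∑ k, g k ((Fin.consEquiv (fun k => Fin (m k))) (j, x) k))
          = g 0 j + S x := by
        rw [Fin.sum_univ_succ]
        simp [Fin.consEquiv, hS]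
      rw [this]; ring
    simp only [hrw]
    have step : ∀ j : Fin (m 0), ∑ x : ∀ k : Fin n, Fin (m k.succ),
        (g 0 j ^ 2 + 2 * g 0 j * S x + S x ^ 2)
        = (∏ k : Fin n, (m k.succ : ℝ)) * g 0 j ^ 2
          + 2 * g 0 j * (∑ x, S x) + ∑ x, S x ^ 2 := by
      intro j
      rw [Finset.sum_add_distrib, Finset.sum_add_distrib, Finset.sum_const,
        ← Finset.mul_sum]
      congr 2
      rw [Finset.card_univ, Fintype.card_pi, nsmul_eq_mul]
      push_cast
      simp
    simp only [step]
    rw [Finset.sum_add_distrib, Finset.sum_add_distrib, ← Finset.mul_sum,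
      Finset.sum_const, Finset.card_univ, Fintype.card_fin, nsmul_eq_mul]
    have hmul : ∑ j : Fin (m 0), 2 * g 0 j * (∑ x, S x) = 0 := by
      rw [← Finset.sum_mul]
      have h2 : ∑ j : Fin (m 0), 2 * g 0 j = 0 := by
        rw [← Finset.mul_sum, h0 0]; ring
      rw [h2, zero_mul]
    rw [hmul, ih (fun k => m k.succ) (fun k => g k.succ) (fun k => h0 k.succ)
      (fun k => hm k.succ), Fin.prod_univ_succ, Fin.sum_univ_succ]
    have hm0 : ((m 0 : ℝ)) ≠ 0 := Nat.cast_ne_zero.mpr (hm 0).ne'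
    field_simp
    ring

/-- Variance identity (Theorem 1.1) for Brieskorn–Pham singularities
x_0^{a_0} + … + x_n^{a_n}: the spectrum is {∑ i_k/a_k - 1 : 1 ≤ i_k ≤ a_k - 1},
of cardinality μ = ∏(a_k - 1), and its variance about (n-1)/2 equals
(α_max - α_min)/12 with α_min = ∑ 1/a_k - 1 and α_max = n - ∑ 1/a_k. -/
theorem variance_brieskorn_pham (n : ℕ) (a : Fin (n + 1) → ℕ) (ha : ∀ k, 2 ≤ a k) :
    (1 / ∏ k, ((a k : ℝ) - 1)) *
        ∑ i : (∀ k : Fin (n + 1), Fin (a k - 1)),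
          ((∑ k, (((i k : ℕ) + 1 : ℝ) / (a k))) - 1 - ((n : ℝ) - 1) / 2) ^ 2
      = (((n : ℝ) - ∑ k, 1 / (a k : ℝ)) - ((∑ k, 1 / (a k : ℝ)) - 1)) / 12 := by
  have hA : ∀ k, (a k : ℝ) ≠ 0 := fun k => Nat.cast_ne_zero.mpr (by have := ha k; omega)
  have hA2 : ∀ k, (2 : ℝ) ≤ (a k : ℝ) := fun k => by exact_mod_cast ha k
  have hcast : ∀ k, ((a k - 1 : ℕ) : ℝ) = (a k : ℝ) - 1 := fun k => by
    have h1 : 1 ≤ a k := by have := ha k; omega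
    rw [Nat.cast_sub h1, Nat.cast_one]
  have hA1 : ∀ k, (a k : ℝ) - 1 ≠ 0 := fun k => by have := hA2 k; intro h; linarith
  set g : ∀ k : Fin (n + 1), Fin (a k - 1) → ℝ :=
    fun k j => (((j : ℕ) : ℝ) + 1) / (a k) - 1 / 2 with hg
  have h0 : ∀ k, ∑ j, g k j = 0 := by
    intro k
    simp only [hg]
    rw [Finset.sum_sub_distrib, ← Finset.sum_div, bp_sum1, Finset.sum_const,
      Finset.card_univ, Fintype.card_fin, nsmul_eq_mul, hcast]
    have hk := hA k
    field_simp
    ring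
  have hint : ∀ i : (∀ k : Fin (n + 1), Fin (a k - 1)),
      (∑ k, (((i k : ℕ) + 1 : ℝ) / (a k))) - 1 - ((n : ℝ) - 1) / 2
        = ∑ k, g k (i k) := by
    intro i
    simp only [hg]
    rw [Finset.sum_sub_distrib, Finset.sum_const, Finset.card_univ,
      Fintype.card_fin, nsmul_eq_mul]
    push_cast
    ring
  simp only [hint]
  rw [bp_key (n + 1) (fun k => a k - 1) g h0 (fun k => Nat.sub_pos_of_lt (ha k))]
  have hP : (∏ k, ((a k - 1 : ℕ) : ℝ)) = ∏ k, ((a k : ℝ) - 1) :=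
    Finset.prod_congr rfl (fun k _ => hcast k)
  have hPne : (∏ k, ((a k : ℝ) - 1)) ≠ 0 := Finset.prod_ne_zero_iff.mpr fun k _ => hA1 k
  rw [hP, one_div, inv_mul_cancel_left₀ hPne]
  have hterm : ∀ k : Fin (n + 1),
      (∑ j, (g k j) ^ 2) / ((a k - 1 : ℕ) : ℝ) = 1 / 12 - (1 / (a k : ℝ)) / 6 := by
    intro k
    have hsq : ∑ j : Fin (a k - 1), (g k j) ^ 2
        = ∑ j : Fin (a k - 1),
            ((((j : ℕ) : ℝ) + 1) ^ 2 / (a k : ℝ) ^ 2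
              - (((j : ℕ) : ℝ) + 1) / (a k : ℝ) + 1 / 4) := by
      apply Finset.sum_congr rfl
      intro j _
      simp only [hg]
      have := hA k
      field_simp
      ring
    rw [hsq, Finset.sum_add_distrib, Finset.sum_sub_distrib, ← Finset.sum_div,
      ← Finset.sum_div, bp_sum1, bp_sum2, Finset.sum_const, Finset.card_univ,
      Fintype.card_fin, nsmul_eq_mul, hcast]
    have := hA k
    have := hA1 k
    field_simp
    ring
  rw [Finset.sum_congr rfl (fun k _ => hterm k), Finset.sum_sub_distrib,
    Finset.sum_const, Finset.card_univ, Fintype.card_fin, nsmul_eq_mul]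
  have hS : ∑ k : Fin (n + 1), (1 / (a k : ℝ)) / 6 = (∑ k, 1 / (a k : ℝ)) / 6 := by
    rw [Finset.sum_div]
  rw [hS]
  push_cast
  ring
end
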